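/- The left semi-tensor product is associative: for real matrices A, B, C of arbitrary compatible-free sizes, (A ⋉ B) ⋉ C = A ⋉ (B ⋉ C), where A ⋉ B := (A ⊗ I_{t/n})(B ⊗ I_{t/p}) with A ∈ M_{m×n}, B ∈ M_{p×q}, t = lcm(n,p). -/
import Mathlib


open Matrix

/-- Kronecker product of real matrices, reindexed to `Fin`-indexed matrices. -/
noncomputable def kronF {m n p q : ℕ} (A : Matrix (Fin m) (Fin n) ℝ)
    (B : Matrix (Fin p) (Fin q) ℝ) : Matrix (Fin (m * p)) (Fin (n * q)) ℝ :=
  Matrix.reindex finProdFinEquiv finProdFinEquiv (Matrix.kroneckerMap (· * ·) A B)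


theorem lcm_div_eq (n p : ℕ) : n * (Nat.lcm n p / n) = p * (Nat.lcm n p / p) := by
  rw [Nat.mul_div_cancel' (Nat.dvd_lcm_left n p), Nat.mul_div_cancel' (Nat.dvd_lcm_right n p)]

/-- The left semi-tensor product `A ⋉ B := (A ⊗ I_{t/n})(B ⊗ I_{t/p})`, `t = lcm n p`. -/
noncomputable def stp {m n p q : ℕ} (A : Matrix (Fin m) (Fin n) ℝ)
    (B : Matrix (Fin p) (Fin q) ℝ) :
    Matrix (Fin (m * (Nat.lcm n p / n))) (Fin (q * (Nat.lcm n p / p))) ℝ :=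
  (kronF A (1 : Matrix (Fin (Nat.lcm n p / n)) (Fin (Nat.lcm n p / n)) ℝ)) *
    (Matrix.reindex (finCongr (lcm_div_eq n p).symm) (Equiv.refl _)
      (kronF B (1 : Matrix (Fin (Nat.lcm n p / p)) (Fin (Nat.lcm n p / p)) ℝ)))

/-! ### Arithmetic lemmas on dimensions -/

theorem stp_master (n p q r : ℕ) :
    p * Nat.lcm (q * (Nat.lcm n p / p)) r = q * Nat.lcm n (p * (Nat.lcm q r / q)) := by
  rw [← Nat.lcm_mul_left, ← Nat.lcm_mul_left,
    show p * (q * (Nat.lcm n p / p)) = q * Nat.lcm n p by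
      rw [mul_left_comm, Nat.mul_div_cancel' (Nat.dvd_lcm_right n p)],
    show q * (p * (Nat.lcm q r / q)) = p * Nat.lcm q r by
      rw [mul_left_comm, Nat.mul_div_cancel' (Nat.dvd_lcm_left q r)],
    show p * Nat.lcm q r = Nat.lcm (p*q) (p*r) from (Nat.lcm_mul_left ..).symm,
    ← Nat.lcm_assoc,
    show Nat.lcm (q*n) (p*q) = q * Nat.lcm n p by rw [mul_comm p q, Nat.lcm_mul_left]]

theorem stp_core1 (n p q r : ℕ) :
    Nat.lcm n p * (Nat.lcm (q * (Nat.lcm n p / p)) r / (q * (Nat.lcm n p / p)))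
      = Nat.lcm n (p * (Nat.lcm q r / q)) := by
  rcases Nat.eq_zero_or_pos q with hq | hq
  · subst hq; simp
  · apply Nat.eq_of_mul_eq_mul_left hq
    rw [← mul_assoc, show q * Nat.lcm n p = p * (q * (Nat.lcm n p / p)) by
        rw [mul_left_comm, Nat.mul_div_cancel' (Nat.dvd_lcm_right n p)],
      mul_assoc, Nat.mul_div_cancel' (Nat.dvd_lcm_left _ r), stp_master]

theorem stp_core2 (n p q r : ℕ) :
    Nat.lcm q r * (Nat.lcm n (p * (Nat.lcm q r / q)) / (p * (Nat.lcm q r / q)))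
      = Nat.lcm (q * (Nat.lcm n p / p)) r := by
  rcases Nat.eq_zero_or_pos p with hp | hp
  · subst hp; simp
  · apply Nat.eq_of_mul_eq_mul_left hp
    rw [← mul_assoc, show p * Nat.lcm q r = q * (p * (Nat.lcm q r / q)) by
        rw [mul_left_comm, Nat.mul_div_cancel' (Nat.dvd_lcm_left q r)],
      mul_assoc, Nat.mul_div_cancel' (Nat.dvd_lcm_right n _), ← stp_master]

theorem stp_dim1 (n p q r : ℕ) :
    (Nat.lcm n p / n) * (Nat.lcm (q * (Nat.lcm n p / p)) r / (q * (Nat.lcm n p / p)))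
      = Nat.lcm n (p * (Nat.lcm q r / q)) / n := by
  rcases Nat.eq_zero_or_pos n with hn | hn
  · subst hn; simp
  · apply Nat.eq_of_mul_eq_mul_left hn
    rw [← mul_assoc, Nat.mul_div_cancel' (Nat.dvd_lcm_left n p), stp_core1,
      Nat.mul_div_cancel' (Nat.dvd_lcm_left n _)]

theorem stp_dim2 (n p q r : ℕ) :
    (Nat.lcm n p / p) * (Nat.lcm (q * (Nat.lcm n p / p)) r / (q * (Nat.lcm n p / p)))
      = (Nat.lcm q r / q) * (Nat.lcm n (p * (Nat.lcm q r / q)) / (p * (Nat.lcm q r / q))) := by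
  rcases Nat.eq_zero_or_pos p with hp | hp
  · subst hp; simp
  rcases Nat.eq_zero_or_pos q with hq | hq
  · subst hq; simp
  apply Nat.eq_of_mul_eq_mul_left (Nat.mul_pos hp hq)
  calc p * q * ((Nat.lcm n p / p) * (Nat.lcm (q * (Nat.lcm n p / p)) r / (q * (Nat.lcm n p / p))))
      = q * ((p * (Nat.lcm n p / p)) *
          (Nat.lcm (q * (Nat.lcm n p / p)) r / (q * (Nat.lcm n p / p)))) := by ring
    _ = q * (Nat.lcm n p * (Nat.lcm (q * (Nat.lcm n p / p)) r / (q * (Nat.lcm n p / p)))) := by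
        rw [Nat.mul_div_cancel' (Nat.dvd_lcm_right n p)]
    _ = q * Nat.lcm n (p * (Nat.lcm q r / q)) := by rw [stp_core1]
    _ = p * (Nat.lcm q r *
          (Nat.lcm n (p * (Nat.lcm q r / q)) / (p * (Nat.lcm q r / q)))) := by
        rw [stp_core2, stp_master]
    _ = p * ((q * (Nat.lcm q r / q)) *
          (Nat.lcm n (p * (Nat.lcm q r / q)) / (p * (Nat.lcm q r / q)))) := by
        rw [Nat.mul_div_cancel' (Nat.dvd_lcm_left q r)]
    _ = p * q * ((Nat.lcm q r / q) *
          (Nat.lcm n (p * (Nat.lcm q r / q)) / (p * (Nat.lcm q r / q)))) := by ring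

theorem stp_dim3 (n p q r : ℕ) :
    Nat.lcm (q * (Nat.lcm n p / p)) r / r
      = (Nat.lcm q r / r) * (Nat.lcm n (p * (Nat.lcm q r / q)) / (p * (Nat.lcm q r / q))) := by
  rcases Nat.eq_zero_or_pos r with hr | hr
  · subst hr; simp
  · apply Nat.eq_of_mul_eq_mul_left hr
    rw [Nat.mul_div_cancel' (Nat.dvd_lcm_right _ r), ← mul_assoc,
      Nat.mul_div_cancel' (Nat.dvd_lcm_right q r), stp_core2]

/-! ### Structural lemmas on `kronF` -/

/-- Cast of matrices along dimension equalities. -/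
noncomputable def mcast {a b a' b' : ℕ} (h1 : a = a') (h2 : b = b')
    (M : Matrix (Fin a) (Fin b) ℝ) : Matrix (Fin a') (Fin b') ℝ :=
  Matrix.reindex (finCongr h1) (finCongr h2) M

@[simp] theorem mcast_rfl {a b : ℕ} (M : Matrix (Fin a) (Fin b) ℝ) : mcast rfl rfl M = M := by
  simp [mcast]

theorem mcast_heq {a b a' b' : ℕ} (h1 : a = a') (h2 : b = b') (M : Matrix (Fin a) (Fin b) ℝ) :
    HEq (mcast h1 h2 M) M := by subst h1; subst h2; simp

theorem mcast_mul_left {a a' b c : ℕ} (h : a = a') (M : Matrix (Fin a) (Fin b) ℝ)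
    (N : Matrix (Fin b) (Fin c) ℝ) : mcast h rfl (M * N) = mcast h rfl M * N := by
  subst h; simp

theorem kronF_mul {m n k a b c : ℕ} (A : Matrix (Fin m) (Fin n) ℝ) (B : Matrix (Fin n) (Fin k) ℝ)
    (A' : Matrix (Fin a) (Fin b) ℝ) (B' : Matrix (Fin b) (Fin c) ℝ) :
    kronF (A * B) (A' * B') = kronF A A' * kronF B B' := by
  simp only [kronF, reindex_apply, Matrix.submatrix_mul_equiv]
  rw [Matrix.mul_kronecker_mul]

theorem kronF_mul_one {m n k x : ℕ} (M : Matrix (Fin m) (Fin n) ℝ) (N : Matrix (Fin n) (Fin k) ℝ) :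
    kronF (M * N) (1 : Matrix (Fin x) (Fin x) ℝ)
      = kronF M (1 : Matrix (Fin x) (Fin x) ℝ) * kronF N (1 : Matrix (Fin x) (Fin x) ℝ) := by
  calc kronF (M * N) (1 : Matrix (Fin x) (Fin x) ℝ)
      = kronF (M * N) ((1 : Matrix (Fin x) (Fin x) ℝ) * 1) := by rw [Matrix.one_mul]
    _ = _ := kronF_mul M N 1 1

theorem kronF_one_one (a b : ℕ) :
    kronF (1 : Matrix (Fin a) (Fin a) ℝ) (1 : Matrix (Fin b) (Fin b) ℝ) = 1 := by
  simp only [kronF]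
  rw [show Matrix.kroneckerMap (· * ·) (1 : Matrix (Fin a) (Fin a) ℝ) 1 = 1 from
    Matrix.one_kronecker_one]
  simp [reindex_apply, Matrix.submatrix_one_equiv]

theorem kronF_apply {m n p q : ℕ} (A : Matrix (Fin m) (Fin n) ℝ) (B : Matrix (Fin p) (Fin q) ℝ)
    (i : Fin (m * p)) (j : Fin (n * q)) :
    kronF A B i j = A i.divNat j.divNat * B i.modNat j.modNat := rfl

theorem mcast_apply {a b a' b' : ℕ} (h1 : a = a') (h2 : b = b') (M : Matrix (Fin a) (Fin b) ℝ)
    (i : Fin a') (j : Fin b') :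
    mcast h1 h2 M i j = M (Fin.cast h1.symm i) (Fin.cast h2.symm j) := rfl

theorem kronF_assoc {m n p q u v : ℕ} (A : Matrix (Fin m) (Fin n) ℝ)
    (B : Matrix (Fin p) (Fin q) ℝ) (C : Matrix (Fin u) (Fin v) ℝ) :
    kronF (kronF A B) C
      = mcast (mul_assoc m p u).symm (mul_assoc n q v).symm (kronF A (kronF B C)) := by
  ext i j
  rw [mcast_apply, kronF_apply, kronF_apply, kronF_apply, kronF_apply]
  have e1 : ∀ (x y z : ℕ) (i : Fin (x*y*z)),
      (Fin.cast (mul_assoc x y z) i).divNat = i.divNat.divNat := by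
    intro x y z i
    apply Fin.ext
    simp only [Fin.coe_divNat, Fin.coe_cast]
    rw [Nat.div_div_eq_div_mul, mul_comm z y]
  have e2 : ∀ (x y z : ℕ) (i : Fin (x*y*z)),
      (Fin.cast (mul_assoc x y z) i).modNat.divNat = i.divNat.modNat := by
    intro x y z i
    apply Fin.ext
    simp only [Fin.coe_divNat, Fin.coe_modNat, Fin.coe_cast]
    rw [mul_comm y z, Nat.mod_mul_right_div_self]
  have e3 : ∀ (x y z : ℕ) (i : Fin (x*y*z)),
      (Fin.cast (mul_assoc x y z) i).modNat.modNat = i.modNat := by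
    intro x y z i
    apply Fin.ext
    simp only [Fin.coe_modNat, Fin.coe_cast]
    exact Nat.mod_mod_of_dvd _ (dvd_mul_left z y)
  rw [show (Eq.symm (mul_assoc m p u)).symm = mul_assoc m p u from rfl,
    show (Eq.symm (mul_assoc n q v)).symm = mul_assoc n q v from rfl,
    e1, e2, e3, e1, e2, e3, mul_assoc]

/-! ### HEq congruence lemmas -/

theorem heq_mul {a b c a' b' c' : ℕ} {M : Matrix (Fin a) (Fin b) ℝ} {N : Matrix (Fin b) (Fin c) ℝ}
    {M' : Matrix (Fin a') (Fin b') ℝ} {N' : Matrix (Fin b') (Fin c') ℝ}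
    (ha : a = a') (hb : b = b') (hc : c = c') (hM : HEq M M') (hN : HEq N N') :
    HEq (M * N) (M' * N') := by
  subst ha; subst hb; subst hc
  rw [eq_of_heq hM, eq_of_heq hN]

theorem kronF_heq_left {a b a' b' p q : ℕ} {M : Matrix (Fin a) (Fin b) ℝ}
    {M' : Matrix (Fin a') (Fin b') ℝ} (h1 : a = a') (h2 : b = b') (hM : HEq M M')
    (N : Matrix (Fin p) (Fin q) ℝ) : HEq (kronF M N) (kronF M' N) := by
  subst h1; subst h2
  rw [eq_of_heq hM]

theorem kronF_one_heq {m n x y : ℕ} (h : x = y) (A : Matrix (Fin m) (Fin n) ℝ) :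
    HEq (kronF A (1 : Matrix (Fin x) (Fin x) ℝ)) (kronF A (1 : Matrix (Fin y) (Fin y) ℝ)) := by
  subst h; rfl

theorem kronF_kronF_one {u v x y z : ℕ} (h : x * y = z) (X : Matrix (Fin u) (Fin v) ℝ) :
    HEq (kronF (kronF X (1 : Matrix (Fin x) (Fin x) ℝ)) (1 : Matrix (Fin y) (Fin y) ℝ))
        (kronF X (1 : Matrix (Fin z) (Fin z) ℝ)) := by
  subst h
  rw [kronF_assoc, kronF_one_one]
  exact mcast_heq _ _ _

theorem stp_def {m n p q : ℕ} (A : Matrix (Fin m) (Fin n) ℝ) (B : Matrix (Fin p) (Fin q) ℝ) :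
    stp A B = kronF A (1 : Matrix (Fin (Nat.lcm n p / n)) (Fin (Nat.lcm n p / n)) ℝ) *
      mcast (lcm_div_eq n p).symm rfl
        (kronF B (1 : Matrix (Fin (Nat.lcm n p / p)) (Fin (Nat.lcm n p / p)) ℝ)) := by
  simp [stp, mcast, finCongr_refl]

/-- Associativity of the left semi-tensor product. -/
theorem stp_assoc {m n p q r s : ℕ} (A : Matrix (Fin m) (Fin n) ℝ)
    (B : Matrix (Fin p) (Fin q) ℝ) (C : Matrix (Fin r) (Fin s) ℝ) :
    HEq (stp (stp A B) C) (stp A (stp B C)) := by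
  simp only [stp_def]
  rw [kronF_mul_one, kronF_mul_one, mcast_mul_left, Matrix.mul_assoc]
  refine heq_mul ?_ ?_ ?_ ?_ (heq_mul ?_ ?_ ?_ ?_ ?_)
  · rw [mul_assoc, stp_dim1]
  · rw [mul_assoc, stp_dim1]
  · rw [stp_dim3, ← mul_assoc]
  · -- HEq F1 F1'
    exact kronF_kronF_one (stp_dim1 n p q r) A
  · rw [mul_assoc, stp_dim1]
  · rw [mul_assoc, stp_dim2, ← mul_assoc]
  · rw [stp_dim3, ← mul_assoc]
  · -- HEq F2 F2'
    exact ((kronF_heq_left (lcm_div_eq n p) rfl (mcast_heq _ _ _) _).trans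
      (kronF_kronF_one (stp_dim2 n p q r) B)).trans
      ((mcast_heq _ _ _).trans (kronF_kronF_one rfl B)).symm
  · -- HEq F3 F3'
    exact ((mcast_heq _ _ _).trans (kronF_one_heq (stp_dim3 n p q r) C)).trans
      ((kronF_heq_left (lcm_div_eq q r) rfl (mcast_heq _ _ _) _).trans
        (kronF_kronF_one rfl C)).symm
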